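/- arXiv:2002.03440 — 2 statements merged into one kernel-verified Lean document; each statement's English description precedes it below -/
import Mathlib

section
/- Let μ < 0 be a root of L_n^{(1)}(-2μ) = 0, set f(x) = x e^{μx} L_n^{(1)}(-2μx), and let u_0 ∈ W_0^{1,2}((0,1)) ∩ W^{2,2}((0,1)). Then -(1/μ) ∫_0^1 u_0'(x) (d/dx)(x L_n^{(1)}(-2μx) e^{μx}) dx = ∫_0^1 x e^{μx} L_n^{(1)}(-2μx) (μ u_0(x) + 2(n+1)u_0(x)/x) dx. -/
/-!
Write `f(x) = x e^{μx} L(-2μx)` with `L = L_n^{(1)}`. Substituting `z = -2μx` into the Laguerre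
equation `z L'' + (2 - z) L' + n L = 0` gives `f'' = μ² f + 2μ(n+1) f / x`. One integration by
parts, whose boundary terms vanish because `u₀(0) = u₀(1) = 0`, turns `-(1/μ) ∫ u₀' f'` into
`(1/μ) ∫ u₀ f''`, which is the right-hand side.
-/

open MeasureTheory Set

/-- The associated Laguerre polynomial L_n^{(β)}(z) = Σ_{k=0}^n (-1)^k C(n+β, n-k) z^k / k!. -/
noncomputable def laguerre (β n : ℕ) (z : ℂ) : ℂ :=
  ∑ k ∈ Finset.range (n + 1),
    (-1 : ℂ) ^ k * ((n + β).choose (n - k) : ℂ) * z ^ k / (Nat.factorial k : ℂ)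

open Polynomial

noncomputable def laguerrePoly (β n : ℕ) : ℂ[X] :=
  ∑ k ∈ Finset.range (n + 1),
    C ((-1 : ℂ) ^ k * ((n + β).choose (n - k) : ℂ) / (k.factorial : ℂ)) * X ^ k

theorem eval_laguerrePoly (β n : ℕ) (z : ℂ) : (laguerrePoly β n).eval z = laguerre β n z := by
  simp only [laguerrePoly, laguerre, eval_finsetSum, eval_mul, eval_C, eval_pow, eval_X]
  exact Finset.sum_congr rfl fun k _ => by ring

theorem coeff_laguerrePoly (β n k : ℕ) :
    (laguerrePoly β n).coeff k =
      if k ≤ n then (-1 : ℂ) ^ k * ((n + β).choose (n - k) : ℂ) / (k.factorial : ℂ) else 0 := by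
  simp only [laguerrePoly, finsetSum_coeff, coeff_C_mul, coeff_X_pow, mul_ite, mul_one, mul_zero,
    Finset.sum_ite_eq, Finset.mem_range, Nat.lt_succ_iff]

theorem laguerrePoly_coeff_recurrence (β n k : ℕ) :
    ((k : ℂ) + 1) * ((k : ℂ) + β + 1) * (laguerrePoly β n).coeff (k + 1)
      + ((n : ℂ) - k) * (laguerrePoly β n).coeff k = 0 := by
  rw [coeff_laguerrePoly, coeff_laguerrePoly]
  rcases lt_trichotomy k n with hlt | rfl | hgt
  · rw [if_pos (Nat.succ_le_of_lt hlt), if_pos hlt.le]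
    have hchoose : ((n + β).choose (n - k) : ℂ) * ((n - k : ℕ) : ℂ)
        = ((n + β).choose (n - (k + 1)) : ℂ) * ((k : ℂ) + β + 1) := by
      have h := Nat.choose_succ_right_eq (n + β) (n - (k + 1))
      rw [show n - (k + 1) + 1 = n - k by omega, show n + β - (n - (k + 1)) = k + β + 1 by omega] at h
      exact_mod_cast h
    rw [Nat.cast_sub hlt.le] at hchoose
    have hfac : (k.factorial : ℂ) ≠ 0 := by exact_mod_cast k.factorial_ne_zero
    rw [Nat.factorial_succ, Nat.cast_mul, pow_succ]
    field_simp
    push_cast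
    linear_combination ((k : ℂ) + 1) * (-1 : ℂ) ^ k * hchoose
  · simp
  · rw [if_neg (by omega), if_neg (by omega)]
    simp

theorem laguerrePoly_ode (β n : ℕ) :
    X * derivative (derivative (laguerrePoly β n))
      + (C ((β : ℂ) + 1) - X) * derivative (laguerrePoly β n) + C (n : ℂ) * laguerrePoly β n = 0 := by
  ext k
  rcases k with _ | k
  · simpa [coeff_derivative] using laguerrePoly_coeff_recurrence β n 0
  · simp only [coeff_add, sub_mul, coeff_sub, coeff_C_mul, coeff_X_mul, coeff_derivative, coeff_zero]
    have h := laguerrePoly_coeff_recurrence β n (k + 1)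
    push_cast at h ⊢
    linear_combination h

theorem hasDerivAt_const_mul_ofReal (a : ℂ) (x : ℝ) : HasDerivAt (fun y : ℝ => a * y) a x := by
  simpa using (hasDerivAt_id x).ofReal_comp.const_mul a

section Mode

variable (p : ℂ[X]) (c : ℂ)

noncomputable def laguerreMode (x : ℝ) : ℂ :=
  (x : ℂ) * p.eval (-2 * c * x) * Complex.exp (c * x)

noncomputable def laguerreModeDeriv (x : ℝ) : ℂ :=
  Complex.exp (c * x) *
    ((1 + c * x) * p.eval (-2 * c * x) - 2 * c * x * (derivative p).eval (-2 * c * x))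

theorem hasDerivAt_eval_neg_two_mul (x : ℝ) :
    HasDerivAt (fun y : ℝ => p.eval (-2 * c * y)) ((derivative p).eval (-2 * c * x) * (-2 * c)) x :=
  (p.hasDerivAt _).comp x (hasDerivAt_const_mul_ofReal (-2 * c) x)

theorem hasDerivAt_laguerreMode (x : ℝ) :
    HasDerivAt (laguerreMode p c) (laguerreModeDeriv p c x) x := by
  have h := ((hasDerivAt_const_mul_ofReal 1 x).mul (hasDerivAt_eval_neg_two_mul p c x)).mul
    (hasDerivAt_const_mul_ofReal c x).cexp
  simp only [one_mul] at h
  refine h.congr_deriv ?_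
  simp only [laguerreModeDeriv, Pi.mul_apply]
  ring

theorem continuous_laguerreMode : Continuous (laguerreMode p c) :=
  continuous_iff_continuousAt.mpr fun x => (hasDerivAt_laguerreMode p c x).continuousAt

theorem hasDerivAt_laguerreModeDeriv {ν : ℂ}
    (hode : X * derivative (derivative p) + (C 2 - X) * derivative p + C ν * p = 0) (x : ℝ) :
    HasDerivAt (laguerreModeDeriv p c)
      (c ^ 2 * laguerreMode p c x + 2 * c * (ν + 1) * Complex.exp (c * x) * p.eval (-2 * c * x))
      x := by
  have hode_x := congrArg (eval (-2 * c * x)) hode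
  simp only [eval_add, eval_sub, eval_mul, eval_X, eval_C, eval_zero] at hode_x
  have h := (hasDerivAt_const_mul_ofReal c x).cexp.mul
    ((((hasDerivAt_const_mul_ofReal c x).const_add 1).mul (hasDerivAt_eval_neg_two_mul p c x)).sub
      ((hasDerivAt_const_mul_ofReal (2 * c) x).mul
        (hasDerivAt_eval_neg_two_mul (derivative p) c x)))
  refine h.congr_deriv ?_
  simp only [laguerreMode, Pi.mul_apply, Pi.sub_apply]
  linear_combination (-2 * c * Complex.exp (c * x)) * hode_x

end Mode

theorem setIntegral_Ioo_deriv_mul_eq_neg_of_eq_zero {A : Type*} [NormedRing A] [NormedAlgebra ℝ A]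
    [CompleteSpace A] {a b : ℝ} (hab : a ≤ b) {u u' v v' : ℝ → A}
    (hu : ContinuousOn u (Icc a b)) (hu' : ContinuousOn u' (Icc a b))
    (huu' : ∀ x ∈ Ioo a b, HasDerivAt u (u' x) x) (ha : u a = 0) (hb : u b = 0)
    (hvv' : ∀ x ∈ Icc a b, HasDerivAt v (v' x) x) (hv' : IntervalIntegrable v' volume a b) :
    ∫ x in Ioo a b, u' x * v x = -∫ x in Ioo a b, u x * v' x := by
  have hparts := intervalIntegral.integral_mul_deriv_eq_deriv_mul_of_hasDerivAt
    (uIcc_of_le hab ▸ hu)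
    (fun x hx => (hvv' x (uIcc_of_le hab ▸ hx)).continuousAt.continuousWithinAt)
    (by simpa [hab] using huu') (fun x hx => hvv' x (Ioo_subset_Icc_self (by simpa [hab] using hx)))
    (hu'.intervalIntegrable_of_Icc hab) hv'
  rw [ha, hb, zero_mul, zero_mul, sub_zero, zero_sub] at hparts
  simp only [intervalIntegral.integral_of_le hab, integral_Ioc_eq_integral_Ioo] at hparts
  rw [hparts, neg_neg]

theorem laguerre_ibp_identity_general
    (n : ℕ) (μ : ℝ) (hμ : μ < 0)
    (u₀ u₀' : ℝ → ℂ)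
    (hcont : ContinuousOn u₀ (Icc 0 1))
    (hcont' : ContinuousOn u₀' (Icc 0 1))
    (hderiv : ∀ x ∈ Ioo (0:ℝ) 1, HasDerivAt u₀ (u₀' x) x)
    (hu0 : u₀ 0 = 0) (hu1 : u₀ 1 = 0) :
    -(1 / (μ : ℂ)) *
        ∫ x in Ioo (0:ℝ) 1,
          u₀' x *
            deriv (fun y : ℝ =>
              (y : ℂ) * laguerre 1 n (-2 * μ * y) * Complex.exp (μ * y)) x
      = ∫ x in Ioo (0:ℝ) 1,
          (x : ℂ) * Complex.exp (μ * x) * laguerre 1 n (-2 * μ * x) *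
            ((μ : ℂ) * u₀ x + 2 * (n + 1) * u₀ x / (x : ℂ)) := by
  set p := laguerrePoly 1 n
  have hμ0 : (μ : ℂ) ≠ 0 := Complex.ofReal_ne_zero.mpr hμ.ne
  have hode : X * derivative (derivative p) + (C 2 - X) * derivative p + C (n : ℂ) * p = 0 := by
    simpa [one_add_one_eq_two] using laguerrePoly_ode 1 n
  have hmode : (fun y : ℝ => (y : ℂ) * laguerre 1 n (-2 * μ * y) * Complex.exp (μ * y))
      = laguerreMode p μ := by
    funext y
    simp only [laguerreMode, p, eval_laguerrePoly]
  have hsecond : Continuous fun x : ℝ => (μ : ℂ) ^ 2 * laguerreMode p μ x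
      + 2 * μ * (n + 1) * Complex.exp (μ * x) * p.eval (-2 * μ * x : ℂ) := by
    have := continuous_laguerreMode p μ
    fun_prop
  have hIBP := setIntegral_Ioo_deriv_mul_eq_neg_of_eq_zero zero_le_one hcont hcont' hderiv hu0 hu1
    (fun x _ => hasDerivAt_laguerreModeDeriv p μ hode x) (hsecond.intervalIntegrable 0 1)
  simp only [hmode, fun x => (hasDerivAt_laguerreMode p μ x).deriv]
  rw [hIBP, neg_mul_neg, ← integral_const_mul]
  refine setIntegral_congr_fun measurableSet_Ioo fun x hx => ?_
  have hx0 : (x : ℂ) ≠ 0 := Complex.ofReal_ne_zero.mpr hx.1.ne'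
  simp only [laguerreMode, p, eval_laguerrePoly]
  field_simp

/-- Integration-by-parts identity (Lemma 3.3 of the paper): for μ < 0 a root of
L_n^{(1)}(-2μ) = 0 and u₀ ∈ W_0^{1,2}((0,1)) ∩ W^{2,2}((0,1)),
-(1/μ) ∫ u₀'(x) (d/dx)(x L_n^{(1)}(-2μx) e^{μx}) dx
  = ∫ x e^{μx} L_n^{(1)}(-2μx) (μ u₀(x) + 2(n+1)u₀(x)/x) dx. -/
theorem laguerre_ibp_identity
    (n : ℕ) (μ : ℝ) (hμ : μ < 0)
    (hroot : laguerre 1 n (-2 * μ) = 0)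
    (u₀ u₀' u₀'' : ℝ → ℂ)
    (hcont : ContinuousOn u₀ (Icc 0 1))
    (hcont' : ContinuousOn u₀' (Icc 0 1))
    (hderiv : ∀ x ∈ Ioo (0:ℝ) 1, HasDerivAt u₀ (u₀' x) x)
    (hderiv' : ∀ x ∈ Ioo (0:ℝ) 1, HasDerivAt u₀' (u₀'' x) x)
    (hu0 : u₀ 0 = 0) (hu1 : u₀ 1 = 0)
    (hL2 : IntegrableOn (fun x => ‖u₀ x‖^2) (Ioo 0 1))
    (hL2' : IntegrableOn (fun x => ‖u₀' x‖^2) (Ioo 0 1))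
    (hL2'' : IntegrableOn (fun x => ‖u₀'' x‖^2) (Ioo 0 1)) :
    -(1 / (μ : ℂ)) *
        ∫ x in Ioo (0:ℝ) 1,
          u₀' x *
            deriv (fun y : ℝ =>
              (y : ℂ) * laguerre 1 n (-2 * μ * y) * Complex.exp (μ * y)) x
      = ∫ x in Ioo (0:ℝ) 1,
          (x : ℂ) * Complex.exp (μ * x) * laguerre 1 n (-2 * μ * x) *
            ((μ : ℂ) * u₀ x + 2 * (n + 1) * u₀ x / (x : ℂ)) :=
  laguerre_ibp_identity_general n μ hμ u₀ u₀' hcont hcont' hderiv hu0 hu1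
end

section
/- Let n ≥ 1 and let μ be the root of L_n^{(1)}(-2μ) = 0 closest to zero (i.e. the largest negative root). Then |μ| ≤ 3/(n+2). -/
/-!
Since `L_n^{(1)}(0) = n + 1 > 0`, it suffices to show `L_n^{(1)}(6 / (n + 2)) ≤ 0`: the intermediate
value theorem then gives a zero `c ∈ (0, 6 / (n + 2)]`, and maximality of `μ` yields `-c / 2 ≤ μ`.
At `x = 6 / (n + 2)` the unsigned coefficients `c_k = C(n + 1, n - k) x ^ k / k!` satisfy
`c_{k+1} / c_k = (n - k) x / ((k + 1) (k + 2)) < 6 / ((k + 1) (k + 2)) ≤ 1` for `k ≥ 1`, so the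
alternating sum is at most its truncation `c₀ - c₁ + c₂ - c₃ + c₄`, an explicit rational function
of `n` which is negative for `n ≥ 2`; the cases `n ≤ 3` are computed directly.
-/

/-- The associated Laguerre polynomial L_n^{(β)}(x) = Σ_{k=0}^n (-1)^k C(n+β, n-k) x^k / k!
(real version). -/
noncomputable def laguerreR (β n : ℕ) (x : ℝ) : ℝ :=
  ∑ k ∈ Finset.range (n + 1),
    (-1 : ℝ) ^ k * ((n + β).choose (n - k) : ℝ) * x ^ k / (Nat.factorial k : ℝ)

open Finset Nat

theorem sum_range_neg_one_pow_mul_mem_Icc {b : ℕ → ℝ} {N : ℕ} (hb₀ : ∀ k, 0 ≤ b k)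
    (hb : ∀ k, k + 1 < N → b (k + 1) ≤ b k) :
    ∑ k ∈ range N, (-1) ^ k * b k ∈ Set.Icc 0 (b 0) := by
  induction N generalizing b with
  | zero => simpa using hb₀ 0
  | succ N ih =>
    obtain ⟨h_nonneg, h_le⟩ := ih (b := fun k ↦ b (k + 1)) (fun k ↦ hb₀ _)
      (fun k hk ↦ hb (k + 1) (by omega))
    have h_le' : ∑ k ∈ range N, (-1) ^ k * b (k + 1) ≤ b 0 := by
      rcases N with _ | N
      · simpa using hb₀ 0
      · exact h_le.trans (hb 0 (by omega))
    rw [sum_range_succ']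
    simp only [pow_succ, mul_neg_one, neg_mul, sum_neg_distrib, pow_zero, one_mul]
    constructor <;> linarith

theorem sum_Ico_neg_one_pow_mul_nonpos {b : ℕ → ℝ} {m N : ℕ} (hm : Odd m)
    (hb₀ : ∀ k, 0 ≤ b k) (hb : ∀ k, m ≤ k → k + 1 < N → b (k + 1) ≤ b k) :
    ∑ k ∈ Ico m N, (-1) ^ k * b k ≤ 0 := by
  rw [sum_Ico_eq_sum_range]
  simp only [pow_add, hm.neg_one_pow, neg_mul, one_mul, sum_neg_distrib, neg_nonpos]
  exact (sum_range_neg_one_pow_mul_mem_Icc (N := N - m) (fun k ↦ hb₀ _)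
    (fun k hk ↦ by simpa only [add_assoc] using hb (m + k) (by omega) (by omega))).1

noncomputable def laguerreCoeff (β n k : ℕ) (x : ℝ) : ℝ :=
  (n + β).choose (n - k) * x ^ k / k !

theorem laguerreR_eq_sum (β n : ℕ) (x : ℝ) :
    laguerreR β n x = ∑ k ∈ range (n + 1), (-1) ^ k * laguerreCoeff β n k x := by
  simp only [laguerreR, laguerreCoeff, mul_div_assoc, mul_assoc]

theorem laguerreCoeff_nonneg (β n k : ℕ) {x : ℝ} (hx : 0 ≤ x) : 0 ≤ laguerreCoeff β n k x := by
  unfold laguerreCoeff; positivity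

theorem laguerreCoeff_zero (β n : ℕ) (x : ℝ) : laguerreCoeff β n 0 x = (n + β).choose n := by
  simp [laguerreCoeff]

theorem laguerreCoeff_succ (β : ℕ) {n k : ℕ} (hk : k < n) (x : ℝ) :
    laguerreCoeff β n (k + 1) x =
      laguerreCoeff β n k x * ((n - k) * x / ((k + 1) * (k + 1 + β))) := by
  have hchoose : ((n + β).choose (n - (k + 1)) : ℝ) * (k + 1 + β) =
      (n + β).choose (n - k) * (n - k) := by
    have h := Nat.choose_succ_right_eq (n + β) (n - (k + 1))
    rw [show n - (k + 1) + 1 = n - k by omega, show n + β - (n - (k + 1)) = k + 1 + β by omega]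
      at h
    rw [← Nat.cast_sub hk.le]
    exact_mod_cast h.symm
  have hβ : (0 : ℝ) < k + 1 + β := by positivity
  unfold laguerreCoeff
  rw [pow_succ, Nat.factorial_succ, Nat.cast_mul, Nat.cast_succ]
  field_simp
  linear_combination x ^ k * x * hchoose

theorem laguerreCoeff_succ_le (β : ℕ) {n k : ℕ} (hk : k < n) {x : ℝ} (hx : 0 ≤ x)
    (h : (n - k) * x ≤ (k + 1) * (k + 1 + β)) :
    laguerreCoeff β n (k + 1) x ≤ laguerreCoeff β n k x := by
  rw [laguerreCoeff_succ β hk]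
  exact mul_le_of_le_one_right (laguerreCoeff_nonneg β n k hx) (div_le_one_of_le₀ h (by positivity))

theorem laguerreR_le_sum_range (β : ℕ) {n j : ℕ} (hj : 2 * j ≤ n) {x : ℝ} (hx : 0 ≤ x)
    (h : n * x ≤ (2 * j + 2) * (2 * j + 2 + β)) :
    laguerreR β n x ≤ ∑ k ∈ range (2 * j + 1), (-1) ^ k * laguerreCoeff β n k x := by
  have tail : ∑ k ∈ Ico (2 * j + 1) (n + 1), (-1) ^ k * laguerreCoeff β n k x ≤ 0 := by
    refine sum_Ico_neg_one_pow_mul_nonpos (odd_two_mul_add_one j)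
      (fun k ↦ laguerreCoeff_nonneg β n k hx)
      fun k hjk hkn ↦ laguerreCoeff_succ_le β (by omega) hx ?_
    have hjk' : (2 * j + 2 : ℝ) ≤ k + 1 := by exact_mod_cast (by omega : 2 * j + 2 ≤ k + 1)
    calc ((n : ℝ) - k) * x ≤ n * x := by gcongr; linarith [(k.cast_nonneg : (0 : ℝ) ≤ k)]
      _ ≤ (2 * j + 2) * (2 * j + 2 + β) := h
      _ ≤ (k + 1) * (k + 1 + β) := by gcongr
  rw [laguerreR_eq_sum, ← sum_range_add_sum_Ico _ (by omega : 2 * j + 1 ≤ n + 1)]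
  linarith

theorem laguerreR_zero (β n : ℕ) : laguerreR β n 0 = (n + β).choose n := by
  rw [laguerreR_eq_sum, sum_range_succ']
  simp [laguerreCoeff]

theorem continuous_laguerreR (β n : ℕ) : Continuous (laguerreR β n) := by
  unfold laguerreR; fun_prop

theorem exists_laguerreR_eq_zero_mem_Ioc (β n : ℕ) {s : ℝ} (hs : 0 < s)
    (h : laguerreR β n s ≤ 0) : ∃ c ∈ Set.Ioc 0 s, laguerreR β n c = 0 := by
  have h₀ : 0 < laguerreR β n 0 := by
    rw [laguerreR_zero]; exact_mod_cast Nat.choose_pos (by omega)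
  obtain ⟨c, hc, hc_root⟩ := intermediate_value_Icc' hs.le (continuous_laguerreR β n).continuousOn
    ⟨h, h₀.le⟩
  refine ⟨c, ⟨hc.1.lt_of_ne ?_, hc.2⟩, hc_root⟩
  rintro rfl
  exact h₀.ne' hc_root

theorem laguerreR_one_six_div_nonpos {n : ℕ} (hn : 1 ≤ n) :
    laguerreR 1 n (6 / (n + 2)) ≤ 0 := by
  rcases lt_or_ge n 4 with hn4 | hn4
  · interval_cases n <;> norm_num [laguerreR, sum_range_succ, Nat.choose]
  have hn' : (4 : ℝ) ≤ n := by exact_mod_cast hn4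
  set x : ℝ := 6 / (n + 2) with hx
  have hx₀ : 0 ≤ x := by positivity
  have hnx : n * x ≤ 6 := by
    rw [hx, mul_div_assoc', div_le_iff₀ (by positivity)]; linarith
  refine (laguerreR_le_sum_range 1 (j := 2) (by omega) hx₀ (by norm_num; linarith)).trans ?_
  have c1 : laguerreCoeff 1 n 1 x = _ := laguerreCoeff_succ 1 (k := 0) (by omega) x
  have c2 : laguerreCoeff 1 n 2 x = _ := laguerreCoeff_succ 1 (k := 1) (by omega) x
  have c3 : laguerreCoeff 1 n 3 x = _ := laguerreCoeff_succ 1 (k := 2) (by omega) x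
  have c4 : laguerreCoeff 1 n 4 x = _ := laguerreCoeff_succ 1 (k := 3) (by omega) x
  simp only [sum_range_succ, sum_range_zero, c4, c3, c2, c1, laguerreCoeff_zero,
    Nat.choose_succ_self_right]
  push_cast
  -- `(n + 2) ^ 4 * (c₀ - c₁ + c₂ - c₃ + c₄) = -(n + 1) (n⁴ + 44 n³ + 21 n² + 254 n - 320) / 20`
  have hpoly : 0 ≤ (n : ℝ) ^ 4 + 44 * n ^ 3 + 21 * n ^ 2 + 254 * n - 320 := by nlinarith
  rw [hx]
  field_simp
  linarith [mul_nonneg (by positivity : (0 : ℝ) ≤ n + 1) hpoly]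

theorem largest_root_bound_general
    (n : ℕ) (hn : 1 ≤ n) (μ : ℝ) (hμ : μ < 0)
    (hmax : ∀ μ' : ℝ, μ' < 0 → laguerreR 1 n (-2 * μ') = 0 → μ' ≤ μ) :
    |μ| ≤ 3 / (n + 2) := by
  obtain ⟨c, ⟨hc₀, hc⟩, hc_root⟩ :=
    exists_laguerreR_eq_zero_mem_Ioc 1 n (by positivity) (laguerreR_one_six_div_nonpos hn)
  have hμc : -(c / 2) ≤ μ :=
    hmax _ (by linarith) (by rwa [neg_mul_neg, mul_div_cancel₀ c two_ne_zero])
  rw [abs_of_neg hμ]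
  linarith [show (6 : ℝ) / (n + 2) = 2 * (3 / (n + 2)) by ring]

/-- If μ is the largest negative root of L_n^{(1)}(-2μ) = 0 (n ≥ 1), then |μ| ≤ 3/(n+2). -/
theorem largest_root_bound
    (n : ℕ) (hn : 1 ≤ n) (μ : ℝ) (hμ : μ < 0)
    (hroot : laguerreR 1 n (-2 * μ) = 0)
    (hmax : ∀ μ' : ℝ, μ' < 0 → laguerreR 1 n (-2 * μ') = 0 → μ' ≤ μ) :
    |μ| ≤ 3 / (n + 2) :=
  largest_root_bound_general n hn μ hμ hmax
end
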